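/- Let n ≥ 1, β > 0, ρ > 0, and let φ : ℝ → ℝ be an admissible φ-divergence generator: φ is twice continuously differentiable on [0,n], ρ-strongly convex on [0,n], φ(z) ≥ 0 for all z, φ(1) = 0 and φ'(1) = 0. Define the distributionally robust loss R(v) = sup_{q ∈ Δ_n} (⟨v, q⟩ − (1/(βn)) Σ_i φ(n q_i)) for v ∈ ℝ^n. If p ∈ Δ_n maximizes f_v(q) = ⟨v, q⟩ − (1/(βn)) Σ_i φ(n q_i) over Δ_n, then R is differentiable at v with gradient equal to p, i.e. R has gradient p at v in the sense that R(v') = R(v) + ⟨p, v' − v⟩ + o(‖v' − v‖) as v' → v. -/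

import Mathlib

/-!
The regulariser `h q = (1/(βn)) Σ φ(n q_i)` is `ρn/β`-strongly convex on the simplex, so
`f_v = ⟪v, ·⟫ - h` grows quadratically away from its maximiser:
`f_v q + μ‖q - p‖² ≤ f_v p` with `μ = ρn/(4β)`. As `f_w q = f_v q + ⟪w - v, q⟫`, Cauchy–Schwarz
and AM–GM turn this into `0 ≤ R w - R v - ⟪p, w - v⟫ ≤ ‖w - v‖² / (4μ)`, which is
differentiability with gradient `p`. The same bound shows that every supremum is finite, so no
maximiser of `f_w` for `w ≠ v` is needed.
-/

open Finset

open scoped RealInnerProductSpace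

section NormedSpace

variable {E : Type*} [NormedAddCommGroup E] [NormedSpace ℝ E] {s : Set E} {m : ℝ} {f : E → ℝ}

theorem StrongConvexOn.subset {t : Set E} (hf : StrongConvexOn t m f) (hst : s ⊆ t)
    (hs : Convex ℝ s) : StrongConvexOn s m f :=
  ⟨hs, fun _ hx _ hy => hf.2 (hst hx) (hst hy)⟩

theorem StrongConvexOn.const_mul {c : ℝ} (hc : 0 ≤ c) (hf : StrongConvexOn s m f) :
    StrongConvexOn s (c * m) fun x => c * f x := by
  refine ⟨hf.1, fun x hx y hy a b ha hb hab => ?_⟩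
  have := mul_le_mul_of_nonneg_left (hf.2 hx hy ha hb hab) hc
  simp only [smul_eq_mul] at this ⊢
  linear_combination this

theorem StrongConvexOn.add_sq_le_of_isMinOn (hf : StrongConvexOn s m f) {p q : E} (hp : p ∈ s)
    (hq : q ∈ s) (hmin : IsMinOn f s p) : f p + m / 4 * ‖q - p‖ ^ 2 ≤ f q := by
  have hhalf : (0 : ℝ) ≤ 1 / 2 := by norm_num
  have hmid := hf.2 hq hp hhalf hhalf (add_halves 1)
  have hpmid := hmin (hf.1 hq hp hhalf hhalf (add_halves 1))
  simp only [smul_eq_mul, Set.mem_ofPred_eq] at hmid hpmid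
  linear_combination 2 * hmid + 2 * hpmid

end NormedSpace

theorem StrongConvexOn.sum_comp_mul_apply {ι : Type*} [Fintype ι] {s : Set ℝ} {m : ℝ}
    {φ : ℝ → ℝ} (hφ : StrongConvexOn s m φ) (c : ℝ) :
    StrongConvexOn {q : EuclideanSpace ℝ ι | ∀ i, c * q i ∈ s} (c ^ 2 * m)
      fun q => ∑ i, φ (c * q i) := by
  refine ⟨fun x hx y hy a b ha hb hab i => ?_, fun x hx y hy a b ha hb hab => ?_⟩
  · simpa [mul_add, mul_left_comm c] using hφ.1 (hx i) (hy i) ha hb hab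
  · have hi (i : ι) : φ (c * (a • x + b • y) i) ≤
        a * φ (c * x i) + b * φ (c * y i) - a * b * (m / 2 * (c * x i - c * y i) ^ 2) := by
      simpa [mul_add, mul_left_comm c, sq_abs] using hφ.2 (hx i) (hy i) ha hb hab
    calc ∑ i, φ (c * (a • x + b • y) i)
        ≤ ∑ i, (a * φ (c * x i) + b * φ (c * y i) -
            a * b * (m / 2 * (c * x i - c * y i) ^ 2)) := sum_le_sum fun i _ => hi i
      _ = _ := by
        simp only [EuclideanSpace.real_norm_sq_eq, PiLp.sub_apply, smul_eq_mul, mul_sum,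
          ← sum_add_distrib, ← sum_sub_distrib]
        exact sum_congr rfl fun i _ => by ring

section InnerProductSpace

variable {E : Type*} [NormedAddCommGroup E] [InnerProductSpace ℝ E] {s : Set E} {m μ : ℝ}
  {f h : E → ℝ} {v p : E}

theorem strongConvexOn_of_forall_add_inner_add_sq_le {g : E → E} (hs : Convex ℝ s)
    (hsupp : ∀ x ∈ s, ∀ y ∈ s, f x + ⟪g x, y - x⟫ + m / 2 * ‖x - y‖ ^ 2 ≤ f y) :
    StrongConvexOn s m f := by
  refine ⟨hs, fun x hx y hy a b ha hb hab => ?_⟩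
  set z := a • x + b • y
  have hxz : x - z = b • (x - y) := by
    obtain rfl : a = 1 - b := by linarith
    simp only [z]; module
  have hyz : y - z = (-a) • (x - y) := by
    obtain rfl : a = 1 - b := by linarith
    simp only [z]; module
  have hx' := hsupp z (hs hx hy ha hb hab) x hx
  have hy' := hsupp z (hs hx hy ha hb hab) y hy
  rw [norm_sub_rev, hxz, real_inner_smul_right, norm_smul, Real.norm_of_nonneg hb] at hx'
  rw [norm_sub_rev, hyz, real_inner_smul_right, norm_smul, Real.norm_eq_abs, abs_neg,
    abs_of_nonneg ha] at hy'
  simp only [smul_eq_mul]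
  linear_combination a * hx' + b * hy' - (f z + a * b * (m / 2 * ‖x - y‖ ^ 2)) * hab

theorem inner_sub_le_add_sq_div_of_forall_add_sq_le (hμ : 0 < μ)
    (hgrowth : ∀ q ∈ s, ⟪v, q⟫ - h q + μ * ‖q - p‖ ^ 2 ≤ ⟪v, p⟫ - h p) (w : E) {q : E}
    (hq : q ∈ s) :
    ⟪w, q⟫ - h q ≤ ⟪w, p⟫ - h p + ‖w - v‖ ^ 2 / (4 * μ) := by
  have hsplit : ⟪w, q⟫ - ⟪w, p⟫ = ⟪v, q⟫ - ⟪v, p⟫ + ⟪w - v, q - p⟫ := by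
    simp only [inner_sub_left, inner_sub_right]; ring
  have hCS := real_inner_le_norm (w - v) (q - p)
  have hAMGM : ‖w - v‖ * ‖q - p‖ - μ * ‖q - p‖ ^ 2 ≤ ‖w - v‖ ^ 2 / (4 * μ) := by
    rw [le_div_iff₀ (by positivity)]
    nlinarith [sq_nonneg (‖w - v‖ - 2 * μ * ‖q - p‖)]
  linarith [hgrowth q hq]

theorem hasGradientAt_of_abs_sub_sub_inner_le [CompleteSpace E] {x g : E} (C : ℝ)
    (hbound : ∀ y, |f y - f x - ⟪g, y - x⟫| ≤ C * ‖y - x‖ ^ 2) : HasGradientAt f g x := by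
  rw [hasGradientAt_iff_isLittleO]
  refine (Asymptotics.IsBigO.of_bound C (Filter.Eventually.of_forall fun y => ?_)).trans_isLittleO
    (Asymptotics.isLittleO_pow_sub_sub x one_lt_two)
  simpa using hbound y

theorem hasGradientAt_sSup_inner_sub_of_forall_add_sq_le [CompleteSpace E] (hμ : 0 < μ)
    (hp : p ∈ s)
    (hgrowth : ∀ q ∈ s, ⟪v, q⟫ - h q + μ * ‖q - p‖ ^ 2 ≤ ⟪v, p⟫ - h p) :
    HasGradientAt (fun w => sSup ((fun q => ⟪w, q⟫ - h q) '' s)) p v := by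
  set R := fun w => sSup ((fun q => ⟪w, q⟫ - h q) '' s)
  have hbounds (w : E) :
      ⟪w, p⟫ - h p ≤ R w ∧ R w ≤ ⟪w, p⟫ - h p + ‖w - v‖ ^ 2 / (4 * μ) := by
    have hub : ∀ y ∈ (fun q => ⟪w, q⟫ - h q) '' s,
        y ≤ ⟪w, p⟫ - h p + ‖w - v‖ ^ 2 / (4 * μ) := by
      rintro _ ⟨q, hq, rfl⟩
      exact inner_sub_le_add_sq_div_of_forall_add_sq_le hμ hgrowth w hq
    exact ⟨le_csSup ⟨_, hub⟩ (Set.mem_image_of_mem _ hp),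
      csSup_le ⟨_, Set.mem_image_of_mem _ hp⟩ hub⟩
  have hRv : R v = ⟪v, p⟫ - h p :=
    le_antisymm (by simpa using (hbounds v).2) (hbounds v).1
  refine hasGradientAt_of_abs_sub_sub_inner_le (1 / (4 * μ)) fun w => ?_
  have hinner : ⟪p, w - v⟫ = ⟪w, p⟫ - ⟪v, p⟫ := by rw [real_inner_comm, inner_sub_left]
  have hw := hbounds w
  rw [abs_le, hRv, hinner, one_div_mul_eq_div]
  constructor <;> linarith [div_nonneg (sq_nonneg ‖w - v‖) (by positivity : (0 : ℝ) ≤ 4 * μ)]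

theorem StrongConvexOn.hasGradientAt_sSup_inner_sub [CompleteSpace E]
    (hh : StrongConvexOn s m h) (hm : 0 < m) (hp : p ∈ s)
    (hmax : ∀ q ∈ s, ⟪v, q⟫ - h q ≤ ⟪v, p⟫ - h p) :
    HasGradientAt (fun w => sSup ((fun q => ⟪w, q⟫ - h q) '' s)) p v := by
  have hconv : StrongConvexOn s m (h - fun q => ⟪v, q⟫) := by
    simpa [StrongConvexOn] using hh.sub ((innerₛₗ ℝ v).concaveOn hh.1).uniformConcaveOn_zero
  refine hasGradientAt_sSup_inner_sub_of_forall_add_sq_le (μ := m / 4) (by positivity) hp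
    fun q hq => ?_
  have := hconv.add_sq_le_of_isMinOn hp hq fun q hq => by
    simp only [Set.mem_ofPred_eq, Pi.sub_apply]; linarith [hmax q hq]
  simp only [Pi.sub_apply] at this
  linarith

end InnerProductSpace

theorem distributionally_robust_loss_hasGradient_general
    (n : ℕ) (hn : 1 ≤ n) (β ρ : ℝ) (hβ : 0 < β) (hρ : 0 < ρ)
    (φ : ℝ → ℝ)
    (hsc : ∀ z ∈ Set.Icc (0:ℝ) (n:ℝ), ∀ z' ∈ Set.Icc (0:ℝ) (n:ℝ),
      φ z + deriv φ z * (z' - z) + ρ / 2 * (z - z')^2 ≤ φ z')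
    (Δ : Set (EuclideanSpace ℝ (Fin n)))
    (hΔ : Δ = {q : EuclideanSpace ℝ (Fin n) | (∀ i, 0 ≤ q i) ∧ ∑ i, q i = 1})
    (f : EuclideanSpace ℝ (Fin n) → EuclideanSpace ℝ (Fin n) → ℝ)
    (hf : ∀ v q, f v q = ∑ i, v i * q i - (1 / (β * n)) * ∑ i, φ (n * q i))
    (R : EuclideanSpace ℝ (Fin n) → ℝ)
    (hR : ∀ v, R v = sSup (f v '' Δ))
    (v p : EuclideanSpace ℝ (Fin n))
    (hpmem : p ∈ Δ)
    (hpmax : ∀ q ∈ Δ, f v q ≤ f v p) :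
    HasGradientAt R p v := by
  have hn0 : (0 : ℝ) < n := by exact_mod_cast hn
  set h : EuclideanSpace ℝ (Fin n) → ℝ := fun q => 1 / (β * n) * ∑ i, φ (n * q i)
  have hfh (w q : EuclideanSpace ℝ (Fin n)) : f w q = ⟪w, q⟫ - h q := by
    simp [hf, h, PiLp.inner_apply, mul_comm]
  have hRh : R = fun w => sSup ((fun q => ⟪w, q⟫ - h q) '' Δ) := by
    funext w
    simp only [hR, ← hfh]
  have hΔconvex : Convex ℝ Δ := by
    rw [hΔ]
    exact (convex_stdSimplex ℝ (Fin n)).linear_preimage (EuclideanSpace.equiv (Fin n) ℝ).toLinearMap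
  have hΔsub : Δ ⊆ {q | ∀ i, (n : ℝ) * q i ∈ Set.Icc (0 : ℝ) n} := by
    rw [hΔ]
    rintro q ⟨hq0, hq1⟩ i
    have : q i ≤ 1 := hq1 ▸ single_le_sum (fun j _ => hq0 j) (mem_univ i)
    exact ⟨mul_nonneg hn0.le (hq0 i), mul_le_of_le_one_right hn0.le this⟩
  have hφ : StrongConvexOn (Set.Icc (0 : ℝ) n) ρ φ :=
    strongConvexOn_of_forall_add_inner_add_sq_le (g := deriv φ) (convex_Icc _ _)
      fun z hz z' hz' => by simpa [mul_comm] using hsc z hz z' hz'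
  have hh : StrongConvexOn Δ (1 / (β * n) * (n ^ 2 * ρ)) h :=
    ((hφ.sum_comp_mul_apply n).subset hΔsub hΔconvex).const_mul (by positivity)
  rw [hRh]
  exact hh.hasGradientAt_sSup_inner_sub (by positivity) hpmem fun q hq => by
    simpa only [hfh] using hpmax q hq

/-- The distributionally robust loss `R` is differentiable, with gradient at `v`
equal to the maximizer `p` of the inner problem `f_v` over the simplex. -/
theorem distributionally_robust_loss_hasGradient
    (n : ℕ) (hn : 1 ≤ n) (β ρ : ℝ) (hβ : 0 < β) (hρ : 0 < ρ)
    (φ : ℝ → ℝ)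
    (hC2 : ContDiffOn ℝ 2 φ (Set.Icc (0:ℝ) (n:ℝ)))
    (hsc : ∀ z ∈ Set.Icc (0:ℝ) (n:ℝ), ∀ z' ∈ Set.Icc (0:ℝ) (n:ℝ),
      φ z + deriv φ z * (z' - z) + ρ / 2 * (z - z')^2 ≤ φ z')
    (hφ0 : ∀ z : ℝ, 0 ≤ φ z) (hφ1 : φ 1 = 0) (hφ1' : deriv φ 1 = 0)
    (Δ : Set (EuclideanSpace ℝ (Fin n)))
    (hΔ : Δ = {q : EuclideanSpace ℝ (Fin n) | (∀ i, 0 ≤ q i) ∧ ∑ i, q i = 1})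
    (f : EuclideanSpace ℝ (Fin n) → EuclideanSpace ℝ (Fin n) → ℝ)
    (hf : ∀ v q, f v q = ∑ i, v i * q i - (1 / (β * n)) * ∑ i, φ (n * q i))
    (R : EuclideanSpace ℝ (Fin n) → ℝ)
    (hR : ∀ v, R v = sSup (f v '' Δ))
    (v p : EuclideanSpace ℝ (Fin n))
    (hpmem : p ∈ Δ)
    (hpmax : ∀ q ∈ Δ, f v q ≤ f v p) :
    HasGradientAt R p v :=
  distributionally_robust_loss_hasGradient_general n hn β ρ hβ hρ φ hsc Δ hΔ f hf R hR v p hpmem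
    hpmax
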